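/- Let (Ω, F, P) be a probability space, let L²(Ω; ℝᵏ) denote the Hilbert space of (equivalence classes of) square-integrable ℝᵏ-valued random vectors on it, let δ > 0, and let N₁ and N₂ be symmetric real k×k matrices such that ⟨N₁v, v⟩ ≥ δ|v|² and ⟨(N₁ + N₂)v, v⟩ ≥ δ|v|² for all v ∈ ℝᵏ. Then the functional f : L²(Ω; ℝᵏ) → ℝ defined by f(u) = E[⟨N₁u, u⟩] + ⟨N₂E[u], E[u]⟩ is strictly convex: for all u ≠ v in L²(Ω; ℝᵏ) and all λ ∈ (0,1), f(λu + (1−λ)v) < λf(u) + (1−λ)f(v). -/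

import Mathlib

open MeasureTheory Matrix RealInnerProductSpace

/-!
The functional is `u ↦ β u u` for the bilinear form `β u v = E⟨N₁u, v⟩ + ⟨N₂E[u], E[v]⟩`, so
`f (a • u + b • v) = a f u + b f v - a b f (u - v)` whenever `a + b = 1`, and strict convexity
follows from the coercivity `δ ‖w‖² ≤ f w` (indeed `f` is `2δ`-strongly convex). Centring `w` at
its mean `m` gives `f w = E⟨N₁(w - m), w - m⟩ + ⟨(N₁ + N₂)m, m⟩`, which is nonnegative as soon as
`N₁` and `N₁ + N₂` are positive semidefinite; applying this with `N₁ - δ I` in place of `N₁`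
costs exactly `δ E|w|² = δ ‖w‖²`.
-/

namespace LinearMap.BilinForm

lemma apply_smul_add_smul_self {E : Type*} [AddCommGroup E] [Module ℝ E]
    (β : LinearMap.BilinForm ℝ E) (x y : E) {a b : ℝ} (hab : a + b = 1) :
    β (a • x + b • y) (a • x + b • y) = a * β x x + b * β y y - a * b * β (x - y) (x - y) := by
  simp only [map_add, map_sub, map_smul, LinearMap.add_apply, LinearMap.sub_apply,
    LinearMap.smul_apply, smul_eq_mul]
  linear_combination (a * β x x + b * β y y) * hab

lemma strongConvexOn_univ_apply_self {E : Type*} [NormedAddCommGroup E] [NormedSpace ℝ E]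
    (β : LinearMap.BilinForm ℝ E) {δ : ℝ} (hβ : ∀ x, δ * ‖x‖ ^ 2 ≤ β x x) :
    StrongConvexOn Set.univ (2 * δ) fun x ↦ β x x := by
  refine ⟨convex_univ, fun x _ y _ a b ha hb hab ↦ ?_⟩
  dsimp only
  rw [apply_smul_add_smul_self β x y hab, smul_eq_mul, smul_eq_mul]
  linarith [mul_le_mul_of_nonneg_left (hβ (x - y)) (mul_nonneg ha hb)]

end LinearMap.BilinForm

namespace MeasureTheory

noncomputable def Lp.integralₗ {Ω F : Type*} [MeasurableSpace Ω] {μ : Measure Ω}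
    [IsFiniteMeasure μ] [NormedAddCommGroup F] [NormedSpace ℝ F] {p : ENNReal} [Fact (1 ≤ p)] :
    Lp F p μ →ₗ[ℝ] F where
  toFun u := ∫ ω, u ω ∂μ
  map_add' u v := by
    rw [integral_congr_ae (Lp.coeFn_add u v)]
    exact integral_add ((Lp.memLp u).integrable Fact.out) ((Lp.memLp v).integrable Fact.out)
  map_smul' c u := by
    rw [integral_congr_ae (Lp.coeFn_smul c u)]
    exact integral_smul c _

variable {Ω E : Type*} [MeasurableSpace Ω] {μ : Measure Ω}
  [NormedAddCommGroup E] [InnerProductSpace ℝ E]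

lemma integrable_inner_apply (T : E →L[ℝ] E) (u v : Lp E 2 μ) :
    Integrable (fun ω ↦ ⟪T (u ω), v ω⟫) μ :=
  (L2.integrable_inner (𝕜 := ℝ) (T.compLp u) v).congr <| by
    filter_upwards [T.coeFn_compLp u] with ω h
    rw [h]

section FiniteMeasure

variable [IsFiniteMeasure μ]

variable (μ) in
noncomputable def meanFieldForm (A B : E →L[ℝ] E) : LinearMap.BilinForm ℝ (Lp E 2 μ) :=
  (innerₗ (Lp E 2 μ)).comp (A.compLpₗ 2 μ)
    + ((innerₗ E).comp B.toLinearMap).compl₁₂ Lp.integralₗ Lp.integralₗ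

lemma meanFieldForm_apply (A B : E →L[ℝ] E) (u v : Lp E 2 μ) :
    meanFieldForm μ A B u v
      = ∫ ω, ⟪A (u ω), v ω⟫ ∂μ + ⟪B (∫ ω, u ω ∂μ), ∫ ω, v ω ∂μ⟫ := by
  simp only [meanFieldForm, LinearMap.add_apply, LinearMap.comp_apply, LinearMap.compl₁₂_apply,
    innerₗ_apply_apply, L2.inner_def]
  congr 1
  refine integral_congr_ae ?_
  filter_upwards [A.coeFn_compLp u] with ω h
  simp [h]

end FiniteMeasure

section ProbabilityMeasure

variable [IsProbabilityMeasure μ] [CompleteSpace E]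

lemma integral_inner_apply_self_centered (T : E →L[ℝ] E) (w : Lp E 2 μ) :
    ∫ ω, ⟪T (w ω), w ω⟫ ∂μ
      = ∫ ω, ⟪T (w ω - ∫ ω, w ω ∂μ), w ω - ∫ ω, w ω ∂μ⟫ ∂μ
        + ⟪T (∫ ω, w ω ∂μ), ∫ ω, w ω ∂μ⟫ := by
  set m := ∫ ω, w ω ∂μ with hm
  let L : E →L[ℝ] ℝ := (innerSL ℝ m).comp T + innerSL ℝ (T m)
  have hL : ∀ x, ⟪T (x - m), x - m⟫ = ⟪T x, x⟫ - (L x - ⟪T m, m⟫) := fun x ↦ by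
    simp only [L, map_sub, inner_sub_left, inner_sub_right, _root_.add_apply,
      ContinuousLinearMap.comp_apply, innerSL_apply_apply, real_inner_comm m]
    ring
  have hw : Integrable (fun ω ↦ w ω) μ := (Lp.memLp w).integrable one_le_two
  have hLw : Integrable (fun ω ↦ L (w ω) - ⟪T m, m⟫) μ :=
    (L.integrable_comp hw).sub (integrable_const _)
  simp_rw [hL]
  rw [integral_sub (integrable_inner_apply T w w) hLw,
    integral_sub (L.integrable_comp hw) (integrable_const _), L.integral_comp_comm hw,
    integral_const]
  simp only [L, _root_.add_apply, ContinuousLinearMap.comp_apply,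
    innerSL_apply_apply, probReal_univ, one_smul, ← hm, real_inner_comm m (T m)]
  ring

lemma meanFieldForm_apply_self_nonneg {A B : E →L[ℝ] E} (hA : ∀ v, 0 ≤ ⟪A v, v⟫)
    (hAB : ∀ v, 0 ≤ ⟪(A + B) v, v⟫) (w : Lp E 2 μ) : 0 ≤ meanFieldForm μ A B w w := by
  rw [meanFieldForm_apply, integral_inner_apply_self_centered, add_assoc, ← inner_add_left]
  exact add_nonneg (integral_nonneg fun ω ↦ hA _) (hAB _)

lemma mul_norm_sq_le_meanFieldForm_apply_self {A B : E →L[ℝ] E} {δ : ℝ}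
    (hA : ∀ v, δ * ‖v‖ ^ 2 ≤ ⟪A v, v⟫) (hAB : ∀ v, δ * ‖v‖ ^ 2 ≤ ⟪(A + B) v, v⟫)
    (w : Lp E 2 μ) : δ * ‖w‖ ^ 2 ≤ meanFieldForm μ A B w w := by
  have hshift : ∀ C : E →L[ℝ] E, ∀ v, ⟪(C - δ • 1) v, v⟫ = ⟪C v, v⟫ - δ * ‖v‖ ^ 2 := by
    intro C v
    simp [inner_sub_left, real_inner_smul_left]
  have hnonneg := meanFieldForm_apply_self_nonneg (μ := μ) (A := A - δ • 1) (B := B)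
    (fun v ↦ by linarith [hshift A v, hA v])
    (fun v ↦ by rw [sub_add_eq_add_sub]; linarith [hshift (A + B) v, hAB v]) w
  have hnorm : ‖w‖ ^ 2 = ∫ ω, ‖w ω‖ ^ 2 ∂μ := by
    rw [← real_inner_self_eq_norm_sq, L2.inner_def]
    simp_rw [real_inner_self_eq_norm_sq]
  have hsq : Integrable (fun ω ↦ ‖w ω‖ ^ 2) μ := (Lp.memLp w).integrable_norm_pow two_ne_zero
  simp only [meanFieldForm_apply, hshift] at hnonneg ⊢
  rw [integral_sub (integrable_inner_apply A w w) (hsq.const_mul δ), integral_const_mul,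
    ← hnorm] at hnonneg
  linarith

end ProbabilityMeasure

end MeasureTheory

theorem meanField_quadratic_strictConvex_general
    {Ω : Type*} [MeasurableSpace Ω] (μ : Measure Ω) [IsProbabilityMeasure μ]
    {k : ℕ} (δ : ℝ) (hδ : 0 < δ) (N₁ N₂ : Matrix (Fin k) (Fin k) ℝ)
    (hN₁ : ∀ v : EuclideanSpace ℝ (Fin k),
      δ * ‖v‖ ^ 2 ≤ ⟪Matrix.toEuclideanLin N₁ v, v⟫)
    (hN₁₂ : ∀ v : EuclideanSpace ℝ (Fin k),
      δ * ‖v‖ ^ 2 ≤ ⟪Matrix.toEuclideanLin (N₁ + N₂) v, v⟫)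
    (f : Lp (EuclideanSpace ℝ (Fin k)) 2 μ → ℝ)
    (hf : ∀ u : Lp (EuclideanSpace ℝ (Fin k)) 2 μ,
      f u = (∫ ω, ⟪Matrix.toEuclideanLin N₁ (u ω), u ω⟫ ∂μ)
        + ⟪Matrix.toEuclideanLin N₂ (∫ ω, u ω ∂μ), ∫ ω, u ω ∂μ⟫) :
    StrictConvexOn ℝ (Set.univ : Set (Lp (EuclideanSpace ℝ (Fin k)) 2 μ)) f := by
  set A := (toEuclideanLin N₁).toContinuousLinearMap
  set B := (toEuclideanLin N₂).toContinuousLinearMap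
  have hf_eq : f = fun u ↦ meanFieldForm μ A B u u :=
    funext fun u ↦ by rw [hf, meanFieldForm_apply]; rfl
  have hcoercive : ∀ w, δ * ‖w‖ ^ 2 ≤ meanFieldForm μ A B w w :=
    mul_norm_sq_le_meanFieldForm_apply_self hN₁ fun v ↦ by simpa [A, B] using hN₁₂ v
  rw [hf_eq]
  exact ((meanFieldForm μ A B).strongConvexOn_univ_apply_self hcoercive).strictConvexOn
    (by positivity)

/-- Strict convexity of the mean-field quadratic functional
`f(u) = E[⟨N₁u, u⟩] + ⟨N₂ E[u], E[u]⟩` on `L²(Ω; ℝᵏ)`, when `N₁`, `N₂` are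
symmetric with `⟨N₁v, v⟩ ≥ δ|v|²` and `⟨(N₁+N₂)v, v⟩ ≥ δ|v|²` for some `δ > 0`. -/
theorem meanField_quadratic_strictConvex
    {Ω : Type*} [MeasurableSpace Ω] (μ : Measure Ω) [IsProbabilityMeasure μ]
    {k : ℕ} (δ : ℝ) (hδ : 0 < δ) (N₁ N₂ : Matrix (Fin k) (Fin k) ℝ)
    (hN₁s : N₁.IsSymm) (hN₂s : N₂.IsSymm)
    (hN₁ : ∀ v : EuclideanSpace ℝ (Fin k),
      δ * ‖v‖ ^ 2 ≤ ⟪Matrix.toEuclideanLin N₁ v, v⟫)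
    (hN₁₂ : ∀ v : EuclideanSpace ℝ (Fin k),
      δ * ‖v‖ ^ 2 ≤ ⟪Matrix.toEuclideanLin (N₁ + N₂) v, v⟫)
    (f : Lp (EuclideanSpace ℝ (Fin k)) 2 μ → ℝ)
    (hf : ∀ u : Lp (EuclideanSpace ℝ (Fin k)) 2 μ,
      f u = (∫ ω, ⟪Matrix.toEuclideanLin N₁ (u ω), u ω⟫ ∂μ)
        + ⟪Matrix.toEuclideanLin N₂ (∫ ω, u ω ∂μ), ∫ ω, u ω ∂μ⟫) :
    StrictConvexOn ℝ (Set.univ : Set (Lp (EuclideanSpace ℝ (Fin k)) 2 μ)) f :=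
  meanField_quadratic_strictConvex_general μ δ hδ N₁ N₂ hN₁ hN₁₂ f hf
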